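/- With the notation of the sector decomposition proposition, the bound is accurate up to δ_X + δ_Y: min_ρ (Δ²X_ρ + Δ²Y_ρ) − min_{i,j} λ_min(X_i + Y_j) ≤ δ_X + δ_Y, where δ_X = (max_i (x_{i+1}−x_i)/2)² and δ_Y = (max_j (y_{j+1}−y_j)/2)². -/

import Mathlib

open Matrix
open scoped ComplexOrder

/-- Expectation value ⟨A⟩_ρ = Tr(ρA) (real part). -/
noncomputable def expval {d : ℕ} (ρ A : Matrix (Fin d) (Fin d) ℂ) : ℝ :=
  ((ρ * A).trace).re

/-- Variance Δ²A_ρ = ⟨A²⟩_ρ − ⟨A⟩_ρ². -/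
noncomputable def variance {d : ℕ} (ρ A : Matrix (Fin d) (Fin d) ℂ) : ℝ :=
  expval ρ (A * A) - (expval ρ A) ^ 2

/-- Density matrix: positive semidefinite with unit trace. -/
def IsDensity {d : ℕ} (ρ : Matrix (Fin d) (Fin d) ℂ) : Prop :=
  ρ.PosSemidef ∧ ρ.trace = 1

/-- Minimal eigenvalue of a Hermitian matrix. -/
noncomputable def lamMin {d : ℕ} {A : Matrix (Fin d) (Fin d) ℂ}
    (hA : A.IsHermitian) : ℝ :=
  ⨅ i, hA.eigenvalues i

section Helpers

variable {d : ℕ}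

lemma expval_add (ρ A B : Matrix (Fin d) (Fin d) ℂ) :
    expval ρ (A + B) = expval ρ A + expval ρ B := by
  simp [expval, mul_add, trace_add]

lemma expval_sub (ρ A B : Matrix (Fin d) (Fin d) ℂ) :
    expval ρ (A - B) = expval ρ A - expval ρ B := by
  simp [expval, mul_sub, trace_sub]

lemma expval_smul (ρ A : Matrix (Fin d) (Fin d) ℂ) (c : ℝ) :
    expval ρ (c • A) = c * expval ρ A := by
  simp [expval, mul_smul_comm, Complex.real_smul, Complex.mul_re]

lemma expval_one (ρ : Matrix (Fin d) (Fin d) ℂ) (h : ρ.trace = 1) :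
    expval ρ (1 : Matrix (Fin d) (Fin d) ℂ) = 1 := by
  simp [expval, h]

lemma trace_mul_vmv (A : Matrix (Fin d) (Fin d) ℂ) (v w : Fin d → ℂ) :
    (A * vecMulVec v w).trace = w ⬝ᵥ (A *ᵥ v) := by
  simp only [trace, diag, mul_apply, vecMulVec_apply, dotProduct, mulVec, Finset.mul_sum]
  exact Finset.sum_congr rfl fun i _ => Finset.sum_congr rfl fun j _ => by ring

lemma trace_re_nonneg {S : Matrix (Fin d) (Fin d) ℂ} (hS : S.PosSemidef) :
    0 ≤ S.trace.re := by
  have h : S.trace.re = ∑ i, (S i i).re := by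
    simp [Matrix.trace, Matrix.diag, Complex.re_sum]
  rw [h]
  refine Finset.sum_nonneg fun i _ => ?_
  have := hS.re_dotProduct_nonneg (Pi.single i 1)
  simpa [Matrix.mulVec_single, dotProduct, Pi.single_apply, Finset.sum_ite_eq,
    apply_ite] using this

lemma expval_herm_sq_nonneg {ρ M : Matrix (Fin d) (Fin d) ℂ} (hρ : ρ.PosSemidef)
    (hM : M.IsHermitian) : 0 ≤ expval ρ (M * M) := by
  have h1 : ρ * (M * M) = ρ * Mᴴ * M := by rw [hM.eq, mul_assoc]
  have h2 : (ρ * Mᴴ * M).trace = (M * ρ * Mᴴ).trace := by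
    rw [Matrix.trace_mul_cycle]
  have h3 : (M * ρ * Mᴴ).PosSemidef := hρ.mul_mul_conjTranspose_same M
  unfold expval
  rw [h1, h2]
  exact trace_re_nonneg h3

lemma herm_shift {X : Matrix (Fin d) (Fin d) ℂ} (hX : X.IsHermitian) (c : ℝ) :
    (X - c • 1).IsHermitian := by
  have : ((c : ℝ) • (1 : Matrix (Fin d) (Fin d) ℂ)).IsHermitian := by
    rw [Matrix.IsHermitian, Matrix.conjTranspose_smul, star_trivial, Matrix.conjTranspose_one]
  exact hX.sub this

lemma shift_sq (X : Matrix (Fin d) (Fin d) ℂ) (c : ℝ) :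
    (X - c • 1) * (X - c • 1) = X * X - (2 * c) • X + (c * c) • 1 := by
  simp only [mul_sub, sub_mul, smul_mul_assoc, mul_smul_comm, one_mul, mul_one, smul_smul]
  module

lemma expval_shift_sq {ρ : Matrix (Fin d) (Fin d) ℂ} (hρ : IsDensity ρ)
    (X : Matrix (Fin d) (Fin d) ℂ) (c : ℝ) :
    expval ρ ((X - c • 1) * (X - c • 1)) =
      expval ρ (X * X) - 2 * c * expval ρ X + c * c := by
  rw [shift_sq, expval_add, expval_sub, expval_smul, expval_smul, expval_one ρ hρ.2]
  ring

lemma variance_nonneg {ρ X : Matrix (Fin d) (Fin d) ℂ} (hρ : IsDensity ρ)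
    (hX : X.IsHermitian) : 0 ≤ variance ρ X := by
  have h := expval_herm_sq_nonneg hρ.1 (herm_shift hX (expval ρ X))
  rw [expval_shift_sq hρ] at h
  unfold variance
  nlinarith [h]

lemma variance_le {ρ X : Matrix (Fin d) (Fin d) ℂ} (hρ : IsDensity ρ) (a b : ℝ) :
    variance ρ X ≤ expval ρ (X * X - (a + b) • X + (a * b) • 1) + ((b - a) / 2) ^ 2 := by
  rw [expval_add, expval_sub, expval_smul, expval_smul, expval_one ρ hρ.2]
  unfold variance
  nlinarith [sq_nonneg (expval ρ X - (a + b) / 2)]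

lemma vmv_posSemidef (v : Fin d → ℂ) : (vecMulVec v (star v)).PosSemidef := by
  have : vecMulVec v (star v) = replicateCol Unit v * (replicateCol Unit v)ᴴ := by
    rw [conjTranspose_replicateCol, ← vecMulVec_eq]
  rw [this]
  exact posSemidef_self_mul_conjTranspose _

lemma vmv_trace (v : Fin d → ℂ) (hv : star v ⬝ᵥ v = 1) :
    (vecMulVec v (star v)).trace = 1 := by
  rw [← one_mul (vecMulVec v (star v)), trace_mul_vmv, Matrix.one_mulVec, hv]

lemma expval_vmv_eig {A : Matrix (Fin d) (Fin d) ℂ} (v : Fin d → ℂ) (lam : ℝ)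
    (hv : star v ⬝ᵥ v = 1) (hAv : A *ᵥ v = lam • v) :
    expval (vecMulVec v (star v)) A = lam := by
  unfold expval
  rw [Matrix.trace_mul_comm, trace_mul_vmv, hAv, dotProduct_smul, hv]
  simp [Complex.real_smul]

open scoped InnerProductSpace in
lemma eigvec_norm {A : Matrix (Fin d) (Fin d) ℂ} (hA : A.IsHermitian) (i : Fin d) :
    star ⇑(hA.eigenvectorBasis i) ⬝ᵥ ⇑(hA.eigenvectorBasis i) = 1 := by
  have h1 : ⟪hA.eigenvectorBasis i, hA.eigenvectorBasis i⟫_ℂ = 1 := by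
    rw [inner_self_eq_norm_sq_to_K, hA.eigenvectorBasis.orthonormal.1 i]
    norm_num
  rw [EuclideanSpace.inner_eq_star_dotProduct] at h1
  rwa [dotProduct_comm] at h1

end Helpers

theorem sector_decomposition_error {d n m : ℕ} (hd : 0 < d) (hn : 0 < n) (hm : 0 < m)
    (X Y : Matrix (Fin d) (Fin d) ℂ)
    (hX : X.IsHermitian) (hY : Y.IsHermitian)
    (x : Fin (n + 1) → ℝ) (y : Fin (m + 1) → ℝ)
    (hx : StrictMono x) (hy : StrictMono y)
    (hΛX : ∀ i, ∃ k, hX.eigenvalues i = x k)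
    (hΛY : ∀ i, ∃ k, hY.eigenvalues i = y k)
    (hop : ∀ (i : Fin n) (j : Fin m),
      ((X * X - (x i.castSucc + x i.succ : ℝ) • X + (x i.castSucc * x i.succ : ℝ) • 1) +
       (Y * Y - (y j.castSucc + y j.succ : ℝ) • Y + (y j.castSucc * y j.succ : ℝ) • 1)).IsHermitian) :
    (⨅ ρ : {ρ : Matrix (Fin d) (Fin d) ℂ // IsDensity ρ},
        variance ρ.1 X + variance ρ.1 Y) -
      (⨅ p : Fin n × Fin m, lamMin (hop p.1 p.2)) ≤
    ((⨆ i : Fin n, (x i.succ - x i.castSucc)) / 2) ^ 2 +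
    ((⨆ j : Fin m, (y j.succ - y j.castSucc)) / 2) ^ 2 := by
  have hdne : Nonempty (Fin d) := ⟨⟨0, hd⟩⟩
  have hne : Nonempty (Fin n × Fin m) := ⟨⟨⟨0, hn⟩, ⟨0, hm⟩⟩⟩
  obtain ⟨p0, hp0⟩ := Finite.exists_min (fun p : Fin n × Fin m => lamMin (hop p.1 p.2))
  have hA := hop p0.1 p0.2
  obtain ⟨i0, hi0⟩ := Finite.exists_min hA.eigenvalues
  set a := x p0.1.castSucc with ha
  set b := x p0.1.succ with hb
  set c := y p0.2.castSucc with hc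
  set e := y p0.2.succ with he
  set v : Fin d → ℂ := ⇑(hA.eigenvectorBasis i0) with hv
  set ρ0 := vecMulVec v (star v) with hρ0def
  have hv1 : star v ⬝ᵥ v = 1 := eigvec_norm hA i0
  have hρ0 : IsDensity ρ0 := ⟨vmv_posSemidef v, vmv_trace v hv1⟩
  have hEA : expval ρ0
      ((X * X - (a + b) • X + (a * b) • 1) + (Y * Y - (c + e) • Y + (c * e) • 1)) =
      hA.eigenvalues i0 :=
    expval_vmv_eig v _ hv1 (hA.mulVec_eigenvectorBasis i0)
  -- infimum over ρ is at most value at ρ0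
  have h1 : (⨅ ρ : {ρ : Matrix (Fin d) (Fin d) ℂ // IsDensity ρ},
        variance ρ.1 X + variance ρ.1 Y) ≤ variance ρ0 X + variance ρ0 Y := by
    refine ciInf_le ⟨0, ?_⟩ (⟨ρ0, hρ0⟩ : {ρ : Matrix (Fin d) (Fin d) ℂ // IsDensity ρ})
    rintro z ⟨ρ, rfl⟩
    exact add_nonneg (variance_nonneg ρ.2 hX) (variance_nonneg ρ.2 hY)
  -- lamMin at p0 is at most the infimum over p
  have h2 : lamMin (hop p0.1 p0.2) ≤ ⨅ p : Fin n × Fin m, lamMin (hop p.1 p.2) :=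
    le_ciInf hp0
  -- eigenvalue i0 is at most lamMin
  have h3 : hA.eigenvalues i0 ≤ lamMin (hop p0.1 p0.2) := le_ciInf hi0
  -- variance bounds
  have h4 : variance ρ0 X ≤ expval ρ0 (X * X - (a + b) • X + (a * b) • 1) + ((b - a) / 2) ^ 2 :=
    variance_le hρ0 a b
  have h5 : variance ρ0 Y ≤ expval ρ0 (Y * Y - (c + e) • Y + (c * e) • 1) + ((e - c) / 2) ^ 2 :=
    variance_le hρ0 c e
  have h6 : expval ρ0 (X * X - (a + b) • X + (a * b) • 1) +
      expval ρ0 (Y * Y - (c + e) • Y + (c * e) • 1) = hA.eigenvalues i0 := by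
    rw [← expval_add]; exact hEA
  -- gap bounds
  have hgx0 : 0 ≤ b - a := le_of_lt (sub_pos.2 (hx (Fin.castSucc_lt_succ (i := p0.1))))
  have hgy0 : 0 ≤ e - c := le_of_lt (sub_pos.2 (hy (Fin.castSucc_lt_succ (i := p0.2))))
  have hgx : b - a ≤ ⨆ i : Fin n, (x i.succ - x i.castSucc) :=
    le_ciSup (f := fun i : Fin n => x i.succ - x i.castSucc) (Set.Finite.bddAbove (Set.finite_range _)) p0.1
  have hgy : e - c ≤ ⨆ j : Fin m, (y j.succ - y j.castSucc) :=
    le_ciSup (f := fun j : Fin m => y j.succ - y j.castSucc) (Set.Finite.bddAbove (Set.finite_range _)) p0.2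
  have h7 : ((b - a) / 2) ^ 2 ≤ ((⨆ i : Fin n, (x i.succ - x i.castSucc)) / 2) ^ 2 := by
    nlinarith
  have h8 : ((e - c) / 2) ^ 2 ≤ ((⨆ j : Fin m, (y j.succ - y j.castSucc)) / 2) ^ 2 := by
    nlinarith
  linarith
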